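/- arXiv:cs/0605043 — 3 statements merged into one kernel-verified Lean document; each statement's English description precedes it below -/
import Mathlib

section
/- The sequent Γ ⊢ Δ is derivable in classical sequent calculus LK if and only if the judgment pΓ, tΔ ⊢ (with empty right-hand side) is derivable in the proof/test system KT. -/
namespace KT0

/-- implicational formulas. -/
inductive Fm : Type
  | base : ℕ → Fm
  | imp : Fm → Fm → Fm

/-- signed formulas: proof formulas `pA` and test formulas `tA`. -/
inductive SF : Type
  | pf : Fm → SF
  | tf : Fm → SF

/-- the proof/test system KT: `KT Γ α` is the judgment `Γ ⊢ α`,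
    where `α` is empty (`none`), a proof formula or a test formula. -/
inductive KT : Set SF → Option SF → Prop
  | axP {Γ A} : SF.pf A ∈ Γ → KT Γ (some (.pf A))
  | axT {Γ A} : SF.tf A ∈ Γ → KT Γ (some (.tf A))
  | impP {Γ A B} : KT (insert (.pf A) (insert (.tf B) Γ)) none →
      KT Γ (some (.pf (.imp A B)))
  | impT {Γ A B} : KT Γ (some (.pf A)) → KT Γ (some (.tf B)) →
      KT Γ (some (.tf (.imp A B)))
  | lamP {Γ A} : KT (insert (.tf A) Γ) none → KT Γ (some (.pf A))
  | lamT {Γ A} : KT (insert (.pf A) Γ) none → KT Γ (some (.tf A))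
  | cut {Γ A} : KT Γ (some (.tf A)) → KT Γ (some (.pf A)) → KT Γ none

/-- the classical sequent calculus LK for implicational logic. -/
inductive LK : Set Fm → Set Fm → Prop
  | ax {Γ Δ A} : A ∈ Γ → A ∈ Δ → LK Γ Δ
  | impR {Γ Δ A B} : LK (insert A Γ) (insert B Δ) → LK Γ (insert (.imp A B) Δ)
  | impL {Γ Δ A B} : LK Γ (insert A Δ) → LK (insert B Γ) Δ →
      LK (insert (.imp A B) Γ) Δ
  | cut {Γ Δ A} : LK (insert A Γ) Δ → LK Γ (insert A Δ) → LK Γ Δ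

theorem KT.weaken {Γ Γ' : Set SF} {α} (h : KT Γ α) (hs : Γ ⊆ Γ') : KT Γ' α := by
  induction h generalizing Γ' with
  | axP h => exact .axP (hs h)
  | axT h => exact .axT (hs h)
  | impP _ ih =>
      exact .impP (ih (Set.insert_subset_insert (Set.insert_subset_insert hs)))
  | impT _ _ ih1 ih2 => exact .impT (ih1 hs) (ih2 hs)
  | lamP _ ih => exact .lamP (ih (Set.insert_subset_insert hs))
  | lamT _ ih => exact .lamT (ih (Set.insert_subset_insert hs))
  | cut _ _ ih1 ih2 => exact .cut (ih1 hs) (ih2 hs)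

theorem LK_to_KT {Γ Δ : Set Fm} (h : LK Γ Δ) :
    KT (SF.pf '' Γ ∪ SF.tf '' Δ) none := by
  induction h with
  | ax hΓ hΔ =>
      exact .cut (.axT (Or.inr ⟨_, hΔ, rfl⟩)) (.axP (Or.inl ⟨_, hΓ, rfl⟩))
  | @impR Γ Δ A B _ ih =>
      rw [Set.image_insert_eq, Set.image_insert_eq, Set.insert_union,
        Set.union_insert] at ih
      rw [Set.image_insert_eq, Set.union_insert]
      exact .cut (.axT (Set.mem_insert _ _))
        ((KT.impP ih).weaken (Set.subset_insert _ _))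
  | @impL Γ Δ A B _ _ ih1 ih2 =>
      rw [Set.image_insert_eq, Set.union_insert] at ih1
      rw [Set.image_insert_eq, Set.insert_union] at ih2
      rw [Set.image_insert_eq, Set.insert_union]
      have hw := Set.subset_insert (SF.pf (Fm.imp A B)) (SF.pf '' Γ ∪ SF.tf '' Δ)
      refine .cut (.impT (.lamP ?_) (.lamT ?_)) (.axP (Set.mem_insert _ _))
      · exact ih1.weaken (Set.insert_subset_insert hw)
      · exact ih2.weaken (Set.insert_subset_insert hw)
  | @cut Γ Δ A _ _ ih1 ih2 =>
      rw [Set.image_insert_eq, Set.insert_union] at ih1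
      rw [Set.image_insert_eq, Set.union_insert] at ih2
      exact .cut (.lamT ih1) (.lamP ih2)

def PS (S : Set SF) : Set Fm := {A | SF.pf A ∈ S}
def TS (S : Set SF) : Set Fm := {A | SF.tf A ∈ S}

@[simp] lemma PS_insert_pf {S B} : PS (insert (SF.pf B) S) = insert B (PS S) := by
  ext x; simp [PS, Set.mem_insert_iff]
@[simp] lemma PS_insert_tf {S B} : PS (insert (SF.tf B) S) = PS S := by
  ext x; simp [PS, Set.mem_insert_iff]
@[simp] lemma TS_insert_pf {S B} : TS (insert (SF.pf B) S) = TS S := by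
  ext x; simp [TS, Set.mem_insert_iff]
@[simp] lemma TS_insert_tf {S B} : TS (insert (SF.tf B) S) = insert B (TS S) := by
  ext x; simp [TS, Set.mem_insert_iff]

def mot (α : Option SF) (P T : Set Fm) : Prop :=
  match α with
  | none => LK P T
  | some (.pf A) => LK P (insert A T)
  | some (.tf A) => LK (insert A P) T

theorem KT_to_LK {S α} (h : KT S α) : mot α (PS S) (TS S) := by
  induction h with
  | axP h => exact .ax h (Set.mem_insert _ _)
  | axT h => exact .ax (Set.mem_insert _ _) h
  | impP _ ih => simp only [mot, PS_insert_pf, PS_insert_tf, TS_insert_pf,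
      TS_insert_tf] at ih ⊢; exact .impR ih
  | impT _ _ ih1 ih2 => exact .impL ih1 ih2
  | lamP _ ih => simpa only [mot, PS_insert_tf, TS_insert_tf] using ih
  | lamT _ ih => simpa only [mot, PS_insert_pf, TS_insert_pf] using ih
  | cut _ _ ih1 ih2 => exact .cut ih1 ih2

lemma PS_union {Γ Δ : Set Fm} : PS (SF.pf '' Γ ∪ SF.tf '' Δ) = Γ := by
  ext x; simp [PS]
lemma TS_union {Γ Δ : Set Fm} : TS (SF.pf '' Γ ∪ SF.tf '' Δ) = Δ := by
  ext x; simp [TS]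

/-- `Γ ⊢ Δ` is derivable in LK iff `pΓ, tΔ ⊢` is derivable in KT. -/
theorem LK_iff_KT (Γ Δ : Set Fm) :
    LK Γ Δ ↔ KT (SF.pf '' Γ ∪ SF.tf '' Δ) none := by
  constructor
  · exact LK_to_KT
  · intro h
    have := KT_to_LK h
    rwa [mot, PS_union, TS_union] at this

end KT0
end

section
/- A is a classically valid implicational formula if and only if the judgment ⊢ pA is derivable in KT. -/
namespace KT1

/-- implicational formulas. -/
inductive Fm : Type
  | base : ℕ → Fm
  | imp : Fm → Fm → Fm

/-- signed formulas: proof formulas `pA` and test formulas `tA`. -/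
inductive SF : Type
  | pf : Fm → SF
  | tf : Fm → SF

/-- the proof/test system KT. -/
inductive KT : Set SF → Option SF → Prop
  | axP {Γ A} : SF.pf A ∈ Γ → KT Γ (some (.pf A))
  | axT {Γ A} : SF.tf A ∈ Γ → KT Γ (some (.tf A))
  | impP {Γ A B} : KT (insert (.pf A) (insert (.tf B) Γ)) none →
      KT Γ (some (.pf (.imp A B)))
  | impT {Γ A B} : KT Γ (some (.pf A)) → KT Γ (some (.tf B)) →
      KT Γ (some (.tf (.imp A B)))
  | lamP {Γ A} : KT (insert (.tf A) Γ) none → KT Γ (some (.pf A))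
  | lamT {Γ A} : KT (insert (.pf A) Γ) none → KT Γ (some (.tf A))
  | cut {Γ A} : KT Γ (some (.tf A)) → KT Γ (some (.pf A)) → KT Γ none

/-- Boolean evaluation of implicational formulas. -/
def eval (v : ℕ → Bool) : Fm → Bool
  | .base n => v n
  | .imp A B => !(eval v A) || eval v B

def sz : Fm → ℕ
  | .base _ => 1
  | .imp A B => sz A + sz B + 1

def wt : SF → ℕ
  | .pf A => sz A
  | .tf A => sz A

def sat (v : ℕ → Bool) : SF → Prop
  | .pf A => eval v A = true
  | .tf A => eval v A = false

deriving instance DecidableEq for Fm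
deriving instance DecidableEq for SF

theorem sz_pos (A : Fm) : 1 ≤ sz A := by
  cases A <;> simp [sz]

theorem weaken {Γ Γ' : Set SF} {d} (h : KT Γ d) (hs : Γ ⊆ Γ') : KT Γ' d := by
  induction h generalizing Γ' with
  | axP hm => exact KT.axP (hs hm)
  | axT hm => exact KT.axT (hs hm)
  | impP _ ih => exact KT.impP (ih (Set.insert_subset_insert (Set.insert_subset_insert hs)))
  | impT _ _ ih1 ih2 => exact KT.impT (ih1 hs) (ih2 hs)
  | lamP _ ih => exact KT.lamP (ih (Set.insert_subset_insert hs))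
  | lamT _ ih => exact KT.lamT (ih (Set.insert_subset_insert hs))
  | cut _ _ ih1 ih2 => exact KT.cut (ih1 hs) (ih2 hs)

theorem sound {Γ d} (h : KT Γ d) : ∀ v, (∀ s ∈ Γ, sat v s) → d.elim False (sat v) := by
  induction h with
  | axP hm => intro v hv; exact hv _ hm
  | axT hm => intro v hv; exact hv _ hm
  | @impP Γ A B _ ih =>
    intro v hv
    show eval v (.imp A B) = true
    cases hA : eval v A with
    | false => simp [eval, hA]
    | true =>
      cases hB : eval v B with
      | true => simp [eval, hB]
      | false =>
        refine absurd (ih v ?_) not_false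
        intro s hs
        rcases hs with h1 | h2 | h3
        · subst h1; exact hA
        · subst h2; exact hB
        · exact hv _ h3
  | @impT Γ A B _ _ ih1 ih2 =>
    intro v hv
    have h1 : eval v A = true := ih1 v hv
    have h2 : eval v B = false := ih2 v hv
    show eval v (.imp A B) = false
    simp [eval, h1, h2]
  | @lamP Γ A _ ih =>
    intro v hv
    show eval v A = true
    cases hA : eval v A with
    | true => rfl
    | false =>
      refine absurd (ih v ?_) not_false
      intro s hs
      rcases hs with h1 | h2
      · subst h1; exact hA
      · exact hv _ h2
  | @lamT Γ A _ ih =>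
    intro v hv
    show eval v A = false
    cases hA : eval v A with
    | false => rfl
    | true =>
      refine absurd (ih v ?_) not_false
      intro s hs
      rcases hs with h1 | h2
      · subst h1; exact hA
      · exact hv _ h2
  | cut _ _ ih1 ih2 =>
    intro v hv
    have h1 := ih1 v hv
    have h2 := ih2 v hv
    simp_all [sat]

/-- the set of a list -/
def LSet (l : List SF) : Set SF := {s | s ∈ l}

theorem LSet_cons (x : SF) (l : List SF) : LSet (x :: l) = insert x (LSet l) := by
  ext s; simp [LSet]

theorem LSet_middle (atoms : List SF) (x : SF) (rest : List SF) :
    LSet (atoms ++ x :: rest) = insert x (LSet (atoms ++ rest)) := by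
  ext s; simp [LSet]; tauto

def isAtom : SF → Prop := fun s => ∃ n, s = .pf (.base n) ∨ s = .tf (.base n)

theorem main (n : ℕ) : ∀ (atoms todo : List SF), (∀ s ∈ atoms, isAtom s) →
    (todo.map wt).sum ≤ n →
    (∀ v, ∃ s ∈ atoms ++ todo, ¬ sat v s) →
    KT (LSet (atoms ++ todo)) none := by
  induction n with
  | zero =>
    intro atoms todo hat hle hun
    cases todo with
    | cons s rest =>
      exfalso
      cases s with
      | pf A => simp [wt] at hle; have := sz_pos A; omega
      | tf A => simp [wt] at hle; have := sz_pos A; omega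
    | nil =>
      simp only [List.append_nil] at *
      -- atoms are all atomic; find a clash
      by_cases hcl : ∃ m, SF.pf (.base m) ∈ atoms ∧ SF.tf (.base m) ∈ atoms
      · obtain ⟨m, h1, h2⟩ := hcl
        exact KT.cut (KT.axT h2) (KT.axP h1)
      · exfalso
        push_neg at hcl
        set v : ℕ → Bool := fun m => decide (SF.pf (.base m) ∈ atoms) with hv
        obtain ⟨s, hs, hns⟩ := hun v
        obtain ⟨m, hm | hm⟩ := hat s hs <;> subst hm
        · exact hns (by simp [sat, eval, hv, hs])
        · refine hns ?_
          simp only [sat, eval, hv, decide_eq_false_iff_not]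
          exact fun h => hcl m h hs
  | succ n ih =>
    intro atoms todo hat hle hun
    cases todo with
    | nil => exact ih atoms [] hat (by simp) hun
    | cons s rest =>
      cases s with
      | pf A =>
        cases A with
        | base m =>
          -- move to atoms
          have hset : LSet (atoms ++ SF.pf (.base m) :: rest)
              = LSet ((SF.pf (.base m) :: atoms) ++ rest) := by
            ext x; simp [LSet]; tauto
          rw [hset]
          refine ih _ _ ?_ ?_ ?_
          · intro x hx
            rcases List.mem_cons.mp hx with rfl | h
            · exact ⟨m, Or.inl rfl⟩
            · exact hat x h
          · simp [wt, sz] at hle ⊢; omega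
          · intro v
            obtain ⟨x, hx, hnx⟩ := hun v
            exact ⟨x, by simp at hx ⊢; tauto, hnx⟩
        | imp B C =>
          -- branch: tf B or pf C
          have h1 : KT (LSet (atoms ++ SF.tf B :: rest)) none := by
            refine ih atoms _ hat ?_ ?_
            · simp [wt, sz] at hle ⊢
              have := sz_pos C; omega
            · intro v
              obtain ⟨x, hx, hnx⟩ := hun v
              simp at hx
              rcases hx with h | rfl | h
              · exact ⟨x, by simp; tauto, hnx⟩
              · -- x = pf (imp B C); ¬sat means eval imp = false, so eval B = true, eval C = false
                simp [sat, eval] at hnx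
                exact ⟨.tf B, by simp, by simp [sat, hnx.1]⟩
              · exact ⟨x, by simp; tauto, hnx⟩
          have h2 : KT (LSet (atoms ++ SF.pf C :: rest)) none := by
            refine ih atoms _ hat ?_ ?_
            · simp [wt, sz] at hle ⊢
              have := sz_pos B; omega
            · intro v
              obtain ⟨x, hx, hnx⟩ := hun v
              simp at hx
              rcases hx with h | rfl | h
              · exact ⟨x, by simp; tauto, hnx⟩
              · simp [sat, eval] at hnx
                exact ⟨.pf C, by simp, by simp [sat, hnx.2]⟩
              · exact ⟨x, by simp; tauto, hnx⟩
          set Γ := LSet (atoms ++ SF.pf (.imp B C) :: rest) with hΓ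
          have hmem : SF.pf (.imp B C) ∈ Γ := by simp [hΓ, LSet]
          have hsub1 : LSet (atoms ++ SF.tf B :: rest) ⊆ insert (SF.tf B) Γ := by
            intro x hx; simp [LSet, hΓ] at hx ⊢; tauto
          have hsub2 : LSet (atoms ++ SF.pf C :: rest) ⊆ insert (SF.pf C) Γ := by
            intro x hx; simp [LSet, hΓ] at hx ⊢; tauto
          have hpB : KT Γ (some (.pf B)) := KT.lamP (weaken h1 hsub1)
          have htC : KT Γ (some (.tf C)) := KT.lamT (weaken h2 hsub2)
          exact KT.cut (KT.impT hpB htC) (KT.axP hmem)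
      | tf A =>
        cases A with
        | base m =>
          have hset : LSet (atoms ++ SF.tf (.base m) :: rest)
              = LSet ((SF.tf (.base m) :: atoms) ++ rest) := by
            ext x; simp [LSet]; tauto
          rw [hset]
          refine ih _ _ ?_ ?_ ?_
          · intro x hx
            rcases List.mem_cons.mp hx with rfl | h
            · exact ⟨m, Or.inr rfl⟩
            · exact hat x h
          · simp [wt, sz] at hle ⊢; omega
          · intro v
            obtain ⟨x, hx, hnx⟩ := hun v
            exact ⟨x, by simp at hx ⊢; tauto, hnx⟩
        | imp B C =>
          have h1 : KT (LSet (atoms ++ SF.pf B :: SF.tf C :: rest)) none := by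
            refine ih atoms _ hat ?_ ?_
            · simp [wt, sz] at hle ⊢; omega
            · intro v
              obtain ⟨x, hx, hnx⟩ := hun v
              simp at hx
              rcases hx with h | rfl | h
              · exact ⟨x, by simp; tauto, hnx⟩
              · simp [sat, eval] at hnx
                cases hB : eval v B with
                | false => exact ⟨.pf B, by simp, by simp [sat, hB]⟩
                | true =>
                  have hC := hnx hB
                  exact ⟨.tf C, by simp, by simp [sat, hC]⟩
              · exact ⟨x, by simp; tauto, hnx⟩
          set Γ := LSet (atoms ++ SF.tf (.imp B C) :: rest) with hΓ
          have hmem : SF.tf (.imp B C) ∈ Γ := by simp [hΓ, LSet]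
          have hsub : LSet (atoms ++ SF.pf B :: SF.tf C :: rest)
              ⊆ insert (SF.pf B) (insert (SF.tf C) Γ) := by
            intro x hx; simp [LSet, hΓ] at hx ⊢; tauto
          exact KT.cut (KT.axT hmem) (KT.impP (weaken h1 hsub))

theorem valid_iff_KT' (A : Fm) :
    (∀ v : ℕ → Bool, eval v A = true) ↔ KT ∅ (some (.pf A)) := by
  constructor
  · intro hval
    apply KT.lamP
    have h : KT (LSet ([] ++ [SF.tf A])) none := by
      refine main (sz A) [] [SF.tf A] (by simp) (by simp [wt]) ?_
      intro v
      exact ⟨.tf A, by simp, by simp [sat, hval v]⟩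
    refine weaken h ?_
    intro x hx; simp [LSet] at hx; simp [hx]
  · intro h v
    exact sound h v (by simp)

/-- `A` is classically valid iff `⊢ pA` is derivable in KT. -/
theorem valid_iff_KT (A : Fm) :
    (∀ v : ℕ → Bool, eval v A = true) ↔ KT ∅ (some (.pf A)) := by
  exact valid_iff_KT' A

end KT1
end

section
/- The sequent Γ ⊢ A is derivable in minimal (implicational intuitionistic) logic if and only if the judgment pΓ ⊢ pA is derivable in the system mT, in which test formulas are treated linearly. -/
namespace MT2

/-- implicational formulas. -/
inductive Fm : Type
  | base : ℕ → Fm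
  | imp : Fm → Fm → Fm

/-- conclusions of mT-judgments: a proof formula, a test formula, or empty. -/
inductive Concl : Type
  | p : Fm → Concl
  | t : Fm → Concl
  | e : Concl

/-- the system mT: `mT Γ δ α` is the judgment `pΓ, δ ⊢ α`, where `Γ` is a set of
    proof formulas and `δ` is an optional (linearly treated) test formula. -/
inductive mT : Set Fm → Option Fm → Concl → Prop
  | axP {Γ A} : A ∈ Γ → mT Γ none (.p A)
  | axT {Γ A} : mT Γ (some A) (.t A)
  | impP {Γ A B} : mT (insert A Γ) (some B) .e → mT Γ none (.p (.imp A B))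
  | impT {Γ A B C} : mT Γ none (.p A) → mT Γ (some C) (.t B) →
      mT Γ (some C) (.t (.imp A B))
  | lamP {Γ A} : mT Γ (some A) .e → mT Γ none (.p A)
  | lamT {Γ A B} : mT (insert A Γ) (some B) .e → mT Γ (some B) (.t A)
  | app {Γ A B} : mT Γ (some B) (.t A) → mT Γ none (.p A) → mT Γ (some B) .e

/-- minimal (implicational intuitionistic) logic. -/
inductive Min : Set Fm → Fm → Prop
  | ax {Γ A} : A ∈ Γ → Min Γ A
  | intro {Γ A B} : Min (insert A Γ) B → Min Γ (.imp A B)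
  | elim {Γ A B} : Min Γ (.imp A B) → Min Γ A → Min Γ B

theorem Min.weaken {Γ Δ : Set Fm} {A : Fm} (h : Min Γ A) (hs : Γ ⊆ Δ) : Min Δ A := by
  induction h generalizing Δ with
  | ax hA => exact Min.ax (hs hA)
  | intro _ ih => exact Min.intro (ih (Set.insert_subset_insert hs))
  | elim _ _ ih1 ih2 => exact Min.elim (ih1 hs) (ih2 hs)

theorem Min.cut {Γ : Set Fm} {A B : Fm} (h1 : Min Γ A) (h2 : Min (insert A Γ) B) :
    Min Γ B := Min.elim (Min.intro h2) h1

/-- interpretation of mT judgments in minimal logic. -/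
def sem (Γ : Set Fm) : Option Fm → Concl → Prop
  | none, .p A => Min Γ A
  | some B, .t A => Min (insert A Γ) B
  | some B, .e => Min Γ B
  | _, _ => True

theorem mT_sound {Γ δ α} (h : mT Γ δ α) : sem Γ δ α := by
  induction h with
  | axP hA => exact Min.ax hA
  | axT => exact Min.ax (Set.mem_insert _ _)
  | impP _ ih => exact Min.intro ih
  | @impT Γ A B C _ _ ih1 ih2 =>
      have hAB : Min (insert (Fm.imp A B) Γ) (Fm.imp A B) := Min.ax (Set.mem_insert _ _)
      have hA : Min (insert (Fm.imp A B) Γ) A :=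
        Min.weaken ih1 (Set.subset_insert _ _)
      have hB : Min (insert (Fm.imp A B) Γ) B := Min.elim hAB hA
      exact Min.cut hB (Min.weaken ih2 (Set.insert_subset_insert (Set.subset_insert _ _)))
  | lamP _ ih => exact ih
  | lamT _ ih => exact ih
  | app _ _ ih1 ih2 => exact Min.cut ih2 ih1

/-- `Γ ⊢ A` is derivable in minimal logic iff `pΓ ⊢ pA`
    is derivable in mT. -/
theorem minimal_iff_mT (Γ : Set Fm) (A : Fm) :
    Min Γ A ↔ mT Γ none (.p A) := by
  constructor
  · intro h
    induction h with
    | ax hA => exact mT.axP hA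
    | intro _ ih => exact mT.impP (mT.app mT.axT ih)
    | elim _ _ ih1 ih2 => exact mT.lamP (mT.app (mT.impT ih2 mT.axT) ih1)
  · intro h
    exact mT_sound h

end MT2
end
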